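/- arXiv:0806.1806 — 14 statements merged into one kernel-verified Lean document; each statement's English description precedes it below -/
import Mathlib

section
/- For every view φ and every domain d, the image under the lifted map φ_Asn of the assignment set of d equals the assignment set of the pointwise-image domain, i.e. φ_Asn '' ⟦d⟧ = ⟦fun x => φ_x '' (d x)⟧; and the preimage under φ_Asn of the assignment set of d equals the assignment set of the pointwise-preimage domain, i.e. φ_Asn ⁻¹' ⟦d⟧ = ⟦fun x => φ_x ⁻¹' (d x)⟧. Hence views map domains to domains. -/
namespace Stmt0

variable {Var Val Val' : Type*}

/-- The assignment set of a domain. -/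
def asn (d : Var → Set Val) : Set (Var → Val) := {a | ∀ x, a x ∈ d x}

/-- A view lifted to assignments. -/
def lift (φ : Var → Val → Val') (a : Var → Val) : Var → Val' := fun x => φ x (a x)

theorem asn_eq_univ_pi (d : Var → Set Val) : asn d = Set.univ.pi d := by
  ext a
  simp [asn]

theorem lift_eq_piMap (φ : Var → Val → Val') : lift φ = Pi.map φ := rfl

theorem image_lift_asn (φ : Var → Val → Val') (d : Var → Set Val) :
    lift φ '' asn d = asn (fun x => φ x '' d x) := by
  rw [asn_eq_univ_pi, asn_eq_univ_pi, lift_eq_piMap, Set.piMap_image_univ_pi]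

theorem preimage_lift_asn (φ : Var → Val → Val') (d : Var → Set Val') :
    lift φ ⁻¹' asn d = asn (fun x => φ x ⁻¹' d x) :=
  rfl

theorem views_map_domains_to_domains_general (φ : Var → Val → Val') :
    (∀ d : Var → Set Val,
      lift φ '' asn d = asn (fun x => φ x '' d x)) ∧
    (∀ d : Var → Set Val',
      lift φ ⁻¹' asn d = asn (fun x => φ x ⁻¹' d x)) :=
  ⟨image_lift_asn φ, preimage_lift_asn φ⟩

/-- For every view `φ` and every domain `d`, the image under the lifted map `φ_Asn` of the
assignment set of `d` equals the assignment set of the pointwise-image domain, and the preimage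
under `φ_Asn` of the assignment set of a domain equals the assignment set of the
pointwise-preimage domain.  Hence views map domains to domains. -/
theorem views_map_domains_to_domains (φ : Var → Val → Val')
    (hφ : ∀ x, Function.Injective (φ x)) :
    (∀ d : Var → Set Val,
      lift φ '' asn d = asn (fun x => φ x '' d x)) ∧
    (∀ d : Var → Set Val',
      lift φ ⁻¹' asn d = asn (fun x => φ x ⁻¹' d x)) :=
  views_map_domains_to_domains_general φ

end Stmt0
end

section
/- For every propagator p over Val' and every view φ, the derived propagator φ̂(p) = φ⁻ ∘ p ∘ φ is a propagator over Val: it maps domains to domains, it is contracting (for all domains d, φ̂(p)(d) ⊆ d pointwise), and it is monotone (d' ⊆ d implies φ̂(p)(d') ⊆ φ̂(p)(d) pointwise). -/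
namespace Stmt1

variable {Var Val Val' : Type*}

/-- The assignment set of a domain. -/
def asn (d : Var → Set Val) : Set (Var → Val) := {a | ∀ x, a x ∈ d x}

/-- A view applied to a domain (pointwise image). -/
def img (φ : Var → Val → Val') (d : Var → Set Val) : Var → Set Val' := fun x => φ x '' d x

/-- The inverse of a view applied to a domain (pointwise preimage). -/
def pre (φ : Var → Val → Val') (d : Var → Set Val') : Var → Set Val := fun x => φ x ⁻¹' d x

/-- The derived propagator `φ̂(p) = φ⁻ ∘ p ∘ φ`. -/
def derived (φ : Var → Val → Val') (p : (Var → Set Val') → Var → Set Val')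
    (d : Var → Set Val) : Var → Set Val := pre φ (p (img φ d))

theorem pre_img_of_injective {φ : Var → Val → Val'} (hφ : ∀ x, Function.Injective (φ x))
    (d : Var → Set Val) : pre φ (img φ d) = d :=
  funext fun x => (hφ x).preimage_image (d x)

theorem img_mono (φ : Var → Val → Val') {d' d : Var → Set Val} (h : ∀ x, d' x ⊆ d x) (x : Var) :
    img φ d' x ⊆ img φ d x :=
  Set.image_mono (h x)

theorem pre_mono (φ : Var → Val → Val') {d' d : Var → Set Val'} (h : ∀ x, d' x ⊆ d x) (x : Var) :
    pre φ d' x ⊆ pre φ d x :=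
  Set.preimage_mono (h x)

theorem derived_subset {φ : Var → Val → Val'} (hφ : ∀ x, Function.Injective (φ x))
    {p : (Var → Set Val') → Var → Set Val'} (hcontr : ∀ d x, p d x ⊆ d x)
    (d : Var → Set Val) (x : Var) : derived φ p d x ⊆ d x := by
  calc derived φ p d x ⊆ pre φ (img φ d) x := pre_mono φ (hcontr (img φ d)) x
    _ = d x := by rw [pre_img_of_injective hφ]

theorem derived_mono (φ : Var → Val → Val') {p : (Var → Set Val') → Var → Set Val'}
    (hmono : ∀ d' d : Var → Set Val', (∀ x, d' x ⊆ d x) → ∀ x, p d' x ⊆ p d x)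
    {d' d : Var → Set Val} (h : ∀ x, d' x ⊆ d x) (x : Var) :
    derived φ p d' x ⊆ derived φ p d x :=
  pre_mono φ (hmono _ _ (img_mono φ h)) x

/-- For every propagator `p` over `Val'` and every view `φ`, the derived propagator
`φ̂(p) = φ⁻ ∘ p ∘ φ` is a propagator over `Val`: it maps domains to domains, it is contracting,
and it is monotone. -/
theorem derived_is_propagator (φ : Var → Val → Val')
    (hφ : ∀ x, Function.Injective (φ x))
    (p : (Var → Set Val') → Var → Set Val')
    (hcontr : ∀ d x, p d x ⊆ d x)
    (hmono : ∀ d' d : Var → Set Val', (∀ x, d' x ⊆ d x) → ∀ x, p d' x ⊆ p d x) :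
    (∀ d : Var → Set Val, ∀ x, derived φ p d x ⊆ d x) ∧
    (∀ d' d : Var → Set Val, (∀ x, d' x ⊆ d x) →
      ∀ x, derived φ p d' x ⊆ derived φ p d x) :=
  ⟨derived_subset hφ hcontr, fun _ _ h => derived_mono φ hmono h⟩

end Stmt1
end

section
/- If a propagator p over Val' implements its associated constraint c_p (i.e., for every assignment b : Var → Val', ⟦p({b})⟧ = {b} if b ∈ c_p and ⟦p({b})⟧ = ∅ otherwise), then the derived propagator φ̂(p) implements φ⁻(c_p): for every assignment a : Var → Val, ⟦φ̂(p)({a})⟧ = {a} if φ_Asn a ∈ c_p, and ⟦φ̂(p)({a})⟧ = ∅ otherwise. -/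
namespace Stmt2

variable {Var Val Val' : Type*}

/-- The assignment set of a domain. -/
def asn (d : Var → Set Val) : Set (Var → Val) := {a | ∀ x, a x ∈ d x}

/-- The singleton domain of an assignment. -/
def single (a : Var → Val) : Var → Set Val := fun x => {a x}

/-- A view lifted to assignments. -/
def lift (φ : Var → Val → Val') (a : Var → Val) : Var → Val' := fun x => φ x (a x)

/-- A view applied to a domain (pointwise image). -/
def img (φ : Var → Val → Val') (d : Var → Set Val) : Var → Set Val' := fun x => φ x '' d x

/-- The inverse of a view applied to a domain (pointwise preimage). -/
def pre (φ : Var → Val → Val') (d : Var → Set Val') : Var → Set Val := fun x => φ x ⁻¹' d x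

/-- The derived propagator `φ̂(p) = φ⁻ ∘ p ∘ φ`. -/
def derived (φ : Var → Val → Val') (p : (Var → Set Val') → Var → Set Val')
    (d : Var → Set Val) : Var → Set Val := pre φ (p (img φ d))

/-- The associated constraint of a propagator `p`. -/
def assocCon (p : (Var → Set Val) → Var → Set Val) : Set (Var → Val) :=
  {a | asn (p (single a)) = {a}}

theorem img_single (φ : Var → Val → Val') (a : Var → Val) :
    img φ (single a) = single (lift φ a) :=
  funext fun _ => Set.image_singleton

theorem asn_pre (φ : Var → Val → Val') (d : Var → Set Val') :
    asn (pre φ d) = lift φ ⁻¹' asn d :=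
  rfl

theorem asn_derived_single (φ : Var → Val → Val') (p : (Var → Set Val') → Var → Set Val')
    (a : Var → Val) :
    asn (derived φ p (single a)) = lift φ ⁻¹' asn (p (single (lift φ a))) := by
  rw [derived, img_single, asn_pre]

theorem lift_injective {φ : Var → Val → Val'} (hφ : ∀ x, Function.Injective (φ x)) :
    Function.Injective (lift φ) :=
  fun _ _ h => funext fun x => hφ x (congrFun h x)

theorem derived_implements_general (φ : Var → Val → Val')
    (hφ : ∀ x, Function.Injective (φ x))
    (p : (Var → Set Val') → Var → Set Val')
    (himpl : ∀ b : Var → Val',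
      (b ∈ assocCon p → asn (p (single b)) = {b}) ∧
      (b ∉ assocCon p → asn (p (single b)) = (∅ : Set (Var → Val')))) :
    ∀ a : Var → Val,
      (lift φ a ∈ assocCon p → asn (derived φ p (single a)) = {a}) ∧
      (lift φ a ∉ assocCon p → asn (derived φ p (single a)) = (∅ : Set (Var → Val))) := by
  intro a
  rw [asn_derived_single]
  refine ⟨fun h => ?_, fun h => ?_⟩
  · rw [(himpl _).1 h, ← Set.image_singleton, (lift_injective hφ).preimage_image]
  · rw [(himpl _).2 h, Set.preimage_empty]

/-- If a propagator `p` over `Val'` implements its associated constraint `c_p`, then the derived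
propagator `φ̂(p)` implements `φ⁻(c_p)`: for every assignment `a : Var → Val`,
`⟦φ̂(p)({a})⟧ = {a}` if `φ_Asn a ∈ c_p`, and `⟦φ̂(p)({a})⟧ = ∅` otherwise. -/
theorem derived_implements (φ : Var → Val → Val')
    (hφ : ∀ x, Function.Injective (φ x))
    (p : (Var → Set Val') → Var → Set Val')
    (hcontr : ∀ d x, p d x ⊆ d x)
    (hmono : ∀ d' d : Var → Set Val', (∀ x, d' x ⊆ d x) → ∀ x, p d' x ⊆ p d x)
    (himpl : ∀ b : Var → Val',
      (b ∈ assocCon p → asn (p (single b)) = {b}) ∧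
      (b ∉ assocCon p → asn (p (single b)) = (∅ : Set (Var → Val')))) :
    ∀ a : Var → Val,
      (lift φ a ∈ assocCon p → asn (derived φ p (single a)) = {a}) ∧
      (lift φ a ∉ assocCon p → asn (derived φ p (single a)) = (∅ : Set (Var → Val))) :=
  derived_implements_general φ hφ p himpl

end Stmt2
end

section
/- Every view is dom injective: for every view φ and every φ-constraint c over Val' (i.e., every element of c lies in the range of φ_Asn), the preimage of the strongest domain containing c equals the strongest domain containing the preimage: φ_Asn ⁻¹' ⟦dom(c)⟧ = ⟦dom(φ_Asn ⁻¹' c)⟧. -/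
namespace Stmt4

variable {Var Val Val' : Type*}

/-- The assignment set of a domain. -/
def asn (d : Var → Set Val) : Set (Var → Val) := {a | ∀ x, a x ∈ d x}

/-- A view lifted to assignments. -/
def lift (φ : Var → Val → Val') (a : Var → Val) : Var → Val' := fun x => φ x (a x)

/-- The strongest domain containing a constraint, defined pointwise. -/
def domOf (c : Set (Var → Val)) : Var → Set Val := fun x => {v | ∃ a ∈ c, a x = v}

theorem preimage_lift_asn (φ : Var → Val → Val') (d : Var → Set Val') :
    lift φ ⁻¹' asn d = asn (fun x => φ x ⁻¹' d x) :=
  rfl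

theorem domOf_preimage_lift_subset (φ : Var → Val → Val') (c : Set (Var → Val')) (x : Var) :
    domOf (lift φ ⁻¹' c) x ⊆ φ x ⁻¹' domOf c x := by
  rintro _ ⟨b, hb, rfl⟩
  exact ⟨lift φ b, hb, rfl⟩

theorem domOf_preimage_lift {φ : Var → Val → Val'} {c : Set (Var → Val')} {x : Var}
    (hφ : Function.Injective (φ x)) (hc : ∀ a ∈ c, a ∈ Set.range (lift φ)) :
    domOf (lift φ ⁻¹' c) x = φ x ⁻¹' domOf c x := by
  refine (domOf_preimage_lift_subset φ c x).antisymm ?_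
  rintro v ⟨b, hb, hbv⟩
  obtain ⟨b', rfl⟩ := hc b hb
  exact ⟨b', hb, hφ hbv⟩

/-- Every view is dom injective: for every view `φ` and every `φ`-constraint `c` over `Val'`
(every element of `c` lies in the range of `φ_Asn`), the preimage of the strongest domain
containing `c` equals the strongest domain containing the preimage:
`φ_Asn ⁻¹' ⟦dom(c)⟧ = ⟦dom(φ_Asn ⁻¹' c)⟧`. -/
theorem view_dom_injective (φ : Var → Val → Val')
    (hφ : ∀ x, Function.Injective (φ x))
    (c : Set (Var → Val'))
    (hc : ∀ a ∈ c, a ∈ Set.range (lift φ)) :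
    lift φ ⁻¹' asn (domOf c) = asn (domOf (lift φ ⁻¹' c)) := by
  rw [preimage_lift_asn]
  congr 1
  funext x
  exact (domOf_preimage_lift (hφ x) hc).symm

end Stmt4
end

section
/- Domain completeness is preserved by deriving: if a propagator p over Val' is domain complete for a constraint c (i.e., for every domain d' over Val', ⟦p(d')⟧ ⊆ ⟦dom(c ∩ ⟦d'⟧)⟧), then for every view φ the derived propagator φ̂(p) is domain complete for φ⁻(c): for every domain d over Val, ⟦φ̂(p)(d)⟧ ⊆ ⟦dom(φ_Asn ⁻¹' c ∩ ⟦d⟧)⟧. -/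
/-
Pull the completeness of `p` at the image domain `φ d` back along the lifted view. Since `⟦φ d⟧`
is the image of `⟦d⟧`, we have `c ∩ ⟦φ d⟧ = φ(φ⁻¹(c) ∩ ⟦d⟧)`; the strongest domain of an image
is the image of the strongest domain, and injectivity of the view gives `φ⁻(φ d) = d`.
-/

namespace Stmt5

variable {Var Val Val' : Type*}

/-- The assignment set of a domain. -/
def asn (d : Var → Set Val) : Set (Var → Val) := {a | ∀ x, a x ∈ d x}

/-- A view lifted to assignments. -/
def lift (φ : Var → Val → Val') (a : Var → Val) : Var → Val' := fun x => φ x (a x)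

/-- A view applied to a domain (pointwise image). -/
def img (φ : Var → Val → Val') (d : Var → Set Val) : Var → Set Val' := fun x => φ x '' d x

/-- The inverse of a view applied to a domain (pointwise preimage). -/
def pre (φ : Var → Val → Val') (d : Var → Set Val') : Var → Set Val := fun x => φ x ⁻¹' d x

/-- The derived propagator `φ̂(p) = φ⁻ ∘ p ∘ φ`. -/
def derived (φ : Var → Val → Val') (p : (Var → Set Val') → Var → Set Val')
    (d : Var → Set Val) : Var → Set Val := pre φ (p (img φ d))

/-- The strongest domain containing a constraint, defined pointwise. -/
def domOf (c : Set (Var → Val)) : Var → Set Val := fun x => {v | ∃ a ∈ c, a x = v}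

section Views

variable (φ : Var → Val → Val')

theorem asn_pre (d : Var → Set Val') : asn (pre φ d) = lift φ ⁻¹' asn d := rfl

theorem asn_img (d : Var → Set Val) : asn (img φ d) = lift φ '' asn d := by
  ext b
  constructor
  · intro hb
    choose a had hab using hb
    exact ⟨a, had, funext hab⟩
  · rintro ⟨a, had, rfl⟩ x
    exact ⟨a x, had x, rfl⟩

theorem domOf_image_lift (s : Set (Var → Val)) : domOf (lift φ '' s) = img φ (domOf s) := by
  funext x
  ext v
  simp only [domOf, img, Set.mem_image]
  constructor
  · rintro ⟨_, ⟨a, has, rfl⟩, rfl⟩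
    exact ⟨a x, ⟨a, has, rfl⟩, rfl⟩
  · rintro ⟨_, ⟨a, has, rfl⟩, rfl⟩
    exact ⟨lift φ a, ⟨a, has, rfl⟩, rfl⟩

variable {φ}

theorem pre_img_of_injective (hφ : ∀ x, Function.Injective (φ x)) (d : Var → Set Val) :
    pre φ (img φ d) = d :=
  funext fun x => Set.preimage_image_eq (d x) (hφ x)

end Views

theorem derived_domain_complete_general (φ : Var → Val → Val')
    (hφ : ∀ x, Function.Injective (φ x))
    (p : (Var → Set Val') → Var → Set Val')
    (c : Set (Var → Val'))
    (hcomp : ∀ d' : Var → Set Val', asn (p d') ⊆ asn (domOf (c ∩ asn d'))) :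
    ∀ d : Var → Set Val,
      asn (derived φ p d) ⊆ asn (domOf (lift φ ⁻¹' c ∩ asn d)) := by
  intro d
  calc asn (derived φ p d) = lift φ ⁻¹' asn (p (img φ d)) := asn_pre φ _
    _ ⊆ lift φ ⁻¹' asn (domOf (c ∩ asn (img φ d))) := Set.preimage_mono (hcomp _)
    _ = asn (domOf (lift φ ⁻¹' c ∩ asn d)) := by
      rw [asn_img, ← Set.image_preimage_inter, domOf_image_lift, ← asn_pre,
        pre_img_of_injective hφ]

/-- Domain completeness is preserved by deriving: if a propagator `p` over `Val'` is domain
complete for a constraint `c`, then for every view `φ` the derived propagator `φ̂(p)` is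
domain complete for `φ⁻(c)`. -/
theorem derived_domain_complete (φ : Var → Val → Val')
    (hφ : ∀ x, Function.Injective (φ x))
    (p : (Var → Set Val') → Var → Set Val')
    (hcontr : ∀ d x, p d x ⊆ d x)
    (hmono : ∀ d' d : Var → Set Val', (∀ x, d' x ⊆ d x) → ∀ x, p d' x ⊆ p d x)
    (c : Set (Var → Val'))
    (hcomp : ∀ d' : Var → Set Val', asn (p d') ⊆ asn (domOf (c ∩ asn d'))) :
    ∀ d : Var → Set Val,
      asn (derived φ p d) ⊆ asn (domOf (lift φ ⁻¹' c ∩ asn d)) :=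
  derived_domain_complete_general φ hφ p c hcomp

end Stmt5
end

section
/- bounds(ℤ) completeness is preserved by deriving through interval bijective views: if a propagator p over ℤ is bounds(ℤ) complete for a φ-constraint c (i.e., for every domain d' with nonempty finite variable domains, ⟦p(d')⟧ ⊆ ⟦conv(c ∩ ⟦conv(⟦d'⟧)⟧)⟧), and the view φ is interval bijective, then the derived propagator φ̂(p) is bounds(ℤ) complete for φ⁻(c): for every domain d with nonempty finite variable domains, ⟦φ̂(p)(d)⟧ ⊆ ⟦conv(φ_Asn ⁻¹' c ∩ ⟦conv(⟦d⟧)⟧)⟧. -/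
namespace Stmt6

variable {Var : Type*}

/-- The assignment set of a domain. -/
def asn {Val : Type*} (d : Var → Set Val) : Set (Var → Val) := {a | ∀ x, a x ∈ d x}

/-- A view lifted to assignments. -/
def lift (φ : Var → ℤ → ℤ) (a : Var → ℤ) : Var → ℤ := fun x => φ x (a x)

/-- A view applied to a domain (pointwise image). -/
def img (φ : Var → ℤ → ℤ) (d : Var → Set ℤ) : Var → Set ℤ := fun x => φ x '' d x

/-- The inverse of a view applied to a domain (pointwise preimage). -/
def pre (φ : Var → ℤ → ℤ) (d : Var → Set ℤ) : Var → Set ℤ := fun x => φ x ⁻¹' d x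

/-- The derived propagator `φ̂(p) = φ⁻ ∘ p ∘ φ`. -/
def derived (φ : Var → ℤ → ℤ) (p : (Var → Set ℤ) → Var → Set ℤ)
    (d : Var → Set ℤ) : Var → Set ℤ := pre φ (p (img φ d))

/-- The strongest convex domain containing a constraint: for a finite nonempty constraint `c`,
`conv c x = Set.Icc (min over a ∈ c of a x) (max over a ∈ c of a x)`, and `conv ∅` is the
empty domain.  (A value lies between the min and the max of `{a x | a ∈ c}` iff it is above
some `a x` and below some `a' x`.) -/
def conv (c : Set (Var → ℤ)) : Var → Set ℤ :=
  fun x => {v | (∃ a ∈ c, a x ≤ v) ∧ (∃ a ∈ c, v ≤ a x)}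

/-- A view is interval injective iff `φ_Asn ⁻¹' ⟦conv(c)⟧ = ⟦conv(φ_Asn ⁻¹' c)⟧` for every
finite `φ`-constraint `c`. -/
def IntervalInjective (φ : Var → ℤ → ℤ) : Prop :=
  ∀ c : Set (Var → ℤ), c.Finite → (∀ a ∈ c, a ∈ Set.range (lift φ)) →
    lift φ ⁻¹' asn (conv c) = asn (conv (lift φ ⁻¹' c))

/-- A view is interval bijective iff it is interval injective and additionally
`φ_Asn '' ⟦conv(⟦d⟧)⟧ = ⟦conv(φ_Asn '' ⟦d⟧)⟧` for every domain `d` with nonempty finite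
variable domains. -/
def IntervalBijective (φ : Var → ℤ → ℤ) : Prop :=
  IntervalInjective φ ∧
  ∀ d : Var → Set ℤ, (∀ x, (d x).Nonempty) → (∀ x, (d x).Finite) →
    lift φ '' asn (conv (asn d)) = asn (conv (lift φ '' asn d))

/-- bounds(ℤ) completeness is preserved by deriving through interval bijective views: if a
propagator `p` over ℤ is bounds(ℤ) complete for a finite `φ`-constraint `c` and the view `φ` is
interval bijective, then the derived propagator `φ̂(p)` is bounds(ℤ) complete for `φ⁻(c)`. -/
theorem derived_boundsZ_complete (φ : Var → ℤ → ℤ)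
    (hφ : ∀ x, Function.Injective (φ x))
    (p : (Var → Set ℤ) → Var → Set ℤ)
    (hcontr : ∀ d x, p d x ⊆ d x)
    (hmono : ∀ d' d : Var → Set ℤ, (∀ x, d' x ⊆ d x) → ∀ x, p d' x ⊆ p d x)
    (c : Set (Var → ℤ)) (hcfin : c.Finite)
    (hphic : ∀ a ∈ c, a ∈ Set.range (lift φ))
    (hbij : IntervalBijective φ)
    (hcomp : ∀ d' : Var → Set ℤ, (∀ x, (d' x).Nonempty) → (∀ x, (d' x).Finite) →
      asn (p d') ⊆ asn (conv (c ∩ asn (conv (asn d'))))) :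
    ∀ d : Var → Set ℤ, (∀ x, (d x).Nonempty) → (∀ x, (d x).Finite) →
      asn (derived φ p d) ⊆ asn (conv (lift φ ⁻¹' c ∩ asn (conv (asn d)))) := by
  intro d hne hfin
  have liftInj : Function.Injective (lift φ) := by
    intro a b h
    funext x
    exact hφ x (congrFun h x)
  have asn_img : asn (img φ d) = lift φ '' asn d := by
    ext a
    constructor
    · intro h
      choose b hb1 hb2 using h
      exact ⟨b, hb1, funext hb2⟩
    · rintro ⟨b, hb, rfl⟩ x
      exact ⟨b x, hb x, rfl⟩
  have asn_pre : ∀ D : Var → Set ℤ, asn (pre φ D) = lift φ ⁻¹' asn D := by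
    intro D; rfl
  -- the image domain has nonempty finite variable domains
  have hne' : ∀ x, (img φ d x).Nonempty := fun x => (hne x).image _
  have hfin' : ∀ x, (img φ d x).Finite := fun x => (hfin x).image _
  -- set S = asn (conv (asn d))
  set S := asn (conv (asn d)) with hS
  have hbij2 := hbij.2 d hne hfin
  -- asn (conv (asn (img φ d))) = lift φ '' S
  have key : asn (conv (asn (img φ d))) = lift φ '' S := by
    rw [asn_img, ← hbij2]
  -- c ∩ lift φ '' S = lift φ '' (lift φ ⁻¹' c ∩ S)
  have hc' : c ∩ lift φ '' S = lift φ '' (lift φ ⁻¹' c ∩ S) := by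
    rw [Set.inter_comm (lift φ ⁻¹' c) S, Set.image_inter_preimage,
      Set.inter_comm]
  have hsub : c ∩ lift φ '' S ⊆ c := Set.inter_subset_left
  have hfin'' : (c ∩ lift φ '' S).Finite := hcfin.subset hsub
  have hphic' : ∀ a ∈ c ∩ lift φ '' S, a ∈ Set.range (lift φ) :=
    fun a ha => hphic a ha.1
  have hinj := hbij.1 (c ∩ lift φ '' S) hfin'' hphic'
  have hpreim : lift φ ⁻¹' (c ∩ lift φ '' S) = lift φ ⁻¹' c ∩ S := by
    rw [hc', Set.preimage_image_eq _ liftInj]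
  intro a ha
  have h1 : lift φ a ∈ asn (p (img φ d)) := fun x => ha x
  have h2 : lift φ a ∈ asn (conv (c ∩ asn (conv (asn (img φ d))))) :=
    hcomp (img φ d) hne' hfin' h1
  rw [key] at h2
  have h3 : a ∈ lift φ ⁻¹' asn (conv (c ∩ lift φ '' S)) := h2
  rw [hinj, hpreim] at h3
  exact h3

end Stmt6
end

section
/- bounds(D) completeness is preserved by deriving through interval injective views: if a propagator p over ℤ is bounds(D) complete for a constraint c (i.e., for every domain d' with nonempty finite variable domains, ⟦p(d')⟧ ⊆ ⟦conv(c ∩ ⟦d'⟧)⟧), and the view φ is interval injective, then the derived propagator φ̂(p) is bounds(D) complete for φ⁻(c): for every domain d with nonempty finite variable domains, ⟦φ̂(p)(d)⟧ ⊆ ⟦conv(φ_Asn ⁻¹' c ∩ ⟦d⟧)⟧. -/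
/-!
Since `⟦φ(d)⟧ = φ_Asn '' ⟦d⟧`, bounds(D) completeness of `p` on `φ(d)` puts every assignment of
`φ̂(p)(d)` into `φ_Asn ⁻¹' ⟦conv(c ∩ φ_Asn '' ⟦d⟧)⟧`. The constraint `c ∩ φ_Asn '' ⟦d⟧` is a finite
`φ`-constraint, so interval injectivity turns this into `⟦conv(φ_Asn ⁻¹' (c ∩ φ_Asn '' ⟦d⟧))⟧`, and
injectivity of `φ_Asn` rewrites the preimage as `φ_Asn ⁻¹' c ∩ ⟦d⟧`.
-/

namespace Stmt7

variable {Var : Type*}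

/-- The assignment set of a domain. -/
def asn {Val : Type*} (d : Var → Set Val) : Set (Var → Val) := {a | ∀ x, a x ∈ d x}

/-- A view lifted to assignments. -/
def lift (φ : Var → ℤ → ℤ) (a : Var → ℤ) : Var → ℤ := fun x => φ x (a x)

/-- A view applied to a domain (pointwise image). -/
def img (φ : Var → ℤ → ℤ) (d : Var → Set ℤ) : Var → Set ℤ := fun x => φ x '' d x

/-- The inverse of a view applied to a domain (pointwise preimage). -/
def pre (φ : Var → ℤ → ℤ) (d : Var → Set ℤ) : Var → Set ℤ := fun x => φ x ⁻¹' d x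

/-- The derived propagator `φ̂(p) = φ⁻ ∘ p ∘ φ`. -/
def derived (φ : Var → ℤ → ℤ) (p : (Var → Set ℤ) → Var → Set ℤ)
    (d : Var → Set ℤ) : Var → Set ℤ := pre φ (p (img φ d))

/-- The strongest convex domain containing a constraint: for a finite nonempty constraint `c`,
`conv c x = Set.Icc (min over a ∈ c of a x) (max over a ∈ c of a x)`, and `conv ∅` is the
empty domain.  (A value lies between the min and the max of `{a x | a ∈ c}` iff it is above
some `a x` and below some `a' x`.) -/
def conv (c : Set (Var → ℤ)) : Var → Set ℤ :=
  fun x => {v | (∃ a ∈ c, a x ≤ v) ∧ (∃ a ∈ c, v ≤ a x)}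

/-- A view is interval injective iff `φ_Asn ⁻¹' ⟦conv(c)⟧ = ⟦conv(φ_Asn ⁻¹' c)⟧` for every
finite `φ`-constraint `c`. -/
def IntervalInjective (φ : Var → ℤ → ℤ) : Prop :=
  ∀ c : Set (Var → ℤ), c.Finite → (∀ a ∈ c, a ∈ Set.range (lift φ)) →
    lift φ ⁻¹' asn (conv c) = asn (conv (lift φ ⁻¹' c))

/-- A view is interval bijective iff it is interval injective and additionally
`φ_Asn '' ⟦conv(⟦d⟧)⟧ = ⟦conv(φ_Asn '' ⟦d⟧)⟧` for every domain `d` with nonempty finite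
variable domains. -/
def IntervalBijective (φ : Var → ℤ → ℤ) : Prop :=
  IntervalInjective φ ∧
  ∀ d : Var → Set ℤ, (∀ x, (d x).Nonempty) → (∀ x, (d x).Finite) →
    lift φ '' asn (conv (asn d)) = asn (conv (lift φ '' asn d))

theorem lift_injective {φ : Var → ℤ → ℤ} (hφ : ∀ x, Function.Injective (φ x)) :
    Function.Injective (lift φ) :=
  fun _ _ h => funext fun x => hφ x (congrFun h x)

theorem asn_img (φ : Var → ℤ → ℤ) (d : Var → Set ℤ) : asn (img φ d) = lift φ '' asn d := by
  ext b
  constructor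
  · intro hb
    choose a ha hab using hb
    exact ⟨a, ha, funext hab⟩
  · rintro ⟨a, ha, rfl⟩ x
    exact ⟨a x, ha x, rfl⟩

theorem IntervalInjective.preimage_asn_conv_inter_image {φ : Var → ℤ → ℤ}
    (hinj : IntervalInjective φ) (hφ : ∀ x, Function.Injective (φ x))
    {c : Set (Var → ℤ)} (hc : c.Finite) (s : Set (Var → ℤ)) :
    lift φ ⁻¹' asn (conv (c ∩ lift φ '' s)) = asn (conv (lift φ ⁻¹' c ∩ s)) := by
  have hrange : ∀ b ∈ c ∩ lift φ '' s, b ∈ Set.range (lift φ) := by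
    rintro b ⟨-, a, -, rfl⟩
    exact ⟨a, rfl⟩
  rw [hinj _ (hc.inter_of_left _) hrange, Set.preimage_inter,
    Set.preimage_image_eq _ (lift_injective hφ)]

theorem derived_boundsD_complete_general (φ : Var → ℤ → ℤ)
    (hφ : ∀ x, Function.Injective (φ x))
    (p : (Var → Set ℤ) → Var → Set ℤ)
    (c : Set (Var → ℤ)) (hcfin : c.Finite)
    (hinj : IntervalInjective φ)
    (hcomp : ∀ d' : Var → Set ℤ, (∀ x, (d' x).Nonempty) → (∀ x, (d' x).Finite) →
      asn (p d') ⊆ asn (conv (c ∩ asn d'))) :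
    ∀ d : Var → Set ℤ, (∀ x, (d x).Nonempty) → (∀ x, (d x).Finite) →
      asn (derived φ p d) ⊆ asn (conv (lift φ ⁻¹' c ∩ asn d)) := by
  intro d hne hfin
  have hcomp_img : asn (p (img φ d)) ⊆ asn (conv (c ∩ lift φ '' asn d)) := by
    rw [← asn_img]
    exact hcomp _ (fun x => (hne x).image _) (fun x => (hfin x).image _)
  calc asn (derived φ p d) = lift φ ⁻¹' asn (p (img φ d)) := rfl
    _ ⊆ lift φ ⁻¹' asn (conv (c ∩ lift φ '' asn d)) := Set.preimage_mono hcomp_img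
    _ = asn (conv (lift φ ⁻¹' c ∩ asn d)) := hinj.preimage_asn_conv_inter_image hφ hcfin _

/-- bounds(D) completeness is preserved by deriving through interval injective views: if a
propagator `p` over ℤ is bounds(D) complete for a finite constraint `c` and the view `φ` is
interval injective, then the derived propagator `φ̂(p)` is bounds(D) complete for `φ⁻(c)`. -/
theorem derived_boundsD_complete (φ : Var → ℤ → ℤ)
    (hφ : ∀ x, Function.Injective (φ x))
    (p : (Var → Set ℤ) → Var → Set ℤ)
    (hcontr : ∀ d x, p d x ⊆ d x)
    (hmono : ∀ d' d : Var → Set ℤ, (∀ x, d' x ⊆ d x) → ∀ x, p d' x ⊆ p d x)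
    (c : Set (Var → ℤ)) (hcfin : c.Finite)
    (hinj : IntervalInjective φ)
    (hcomp : ∀ d' : Var → Set ℤ, (∀ x, (d' x).Nonempty) → (∀ x, (d' x).Finite) →
      asn (p d') ⊆ asn (conv (c ∩ asn d'))) :
    ∀ d : Var → Set ℤ, (∀ x, (d x).Nonempty) → (∀ x, (d x).Finite) →
      asn (derived φ p d) ⊆ asn (conv (lift φ ⁻¹' c ∩ asn d)) :=
  derived_boundsD_complete_general φ hφ p c hcfin hinj hcomp

end Stmt7
end

section
/- Idempotence is preserved by deriving: if a propagator p over Val' is idempotent (p(p(d')) = p(d') for every domain d' over Val'), then for every view φ the derived propagator φ̂(p) is idempotent: φ̂(p)(φ̂(p)(d)) = φ̂(p)(d) for every domain d over Val. -/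
/-!
A contracting propagator never leaves the image of a view, and on that image `φ ∘ φ⁻` is the
identity. Hence `φ (φ̂(p) d) = p (φ d)`, so applying `φ̂(p)` twice computes `φ⁻ (p (p (φ d)))`,
which idempotence of `p` collapses to `φ̂(p) d`.
-/

namespace Stmt8

variable {Var Val Val' : Type*}

/-- A view applied to a domain (pointwise image). -/
def img (φ : Var → Val → Val') (d : Var → Set Val) : Var → Set Val' := fun x => φ x '' d x

/-- The inverse of a view applied to a domain (pointwise preimage). -/
def pre (φ : Var → Val → Val') (d : Var → Set Val') : Var → Set Val := fun x => φ x ⁻¹' d x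

/-- The derived propagator `φ̂(p) = φ⁻ ∘ p ∘ φ`. -/
def derived (φ : Var → Val → Val') (p : (Var → Set Val') → Var → Set Val')
    (d : Var → Set Val) : Var → Set Val := pre φ (p (img φ d))

theorem img_pre_of_subset_range {φ : Var → Val → Val'} {d : Var → Set Val'}
    (hd : ∀ x, d x ⊆ Set.range (φ x)) : img φ (pre φ d) = d :=
  funext fun x => Set.image_preimage_eq_of_subset (hd x)

theorem img_derived {φ : Var → Val → Val'} {p : (Var → Set Val') → Var → Set Val'}
    (hcontr : ∀ d x, p d x ⊆ d x) (d : Var → Set Val) :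
    img φ (derived φ p d) = p (img φ d) :=
  img_pre_of_subset_range fun x => (hcontr _ x).trans (Set.image_subset_range _ _)

theorem derived_idempotent_general (φ : Var → Val → Val')
    (p : (Var → Set Val') → Var → Set Val')
    (hcontr : ∀ d x, p d x ⊆ d x)
    (hidem : ∀ d' : Var → Set Val', p (p d') = p d') :
    ∀ d : Var → Set Val, derived φ p (derived φ p d) = derived φ p d := by
  intro d
  rw [derived, img_derived hcontr, hidem, derived]

/-- Idempotence is preserved by deriving: if a propagator `p` over `Val'` is idempotent, then
for every view `φ` the derived propagator `φ̂(p)` is idempotent. -/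
theorem derived_idempotent (φ : Var → Val → Val')
    (hφ : ∀ x, Function.Injective (φ x))
    (p : (Var → Set Val') → Var → Set Val')
    (hcontr : ∀ d x, p d x ⊆ d x)
    (hmono : ∀ d' d : Var → Set Val', (∀ x, d' x ⊆ d x) → ∀ x, p d' x ⊆ p d x)
    (hidem : ∀ d' : Var → Set Val', p (p d') = p d') :
    ∀ d : Var → Set Val, derived φ p (derived φ p d) = derived φ p d :=
  derived_idempotent_general φ p hcontr hidem

end Stmt8
end

section
/- Subsumption transfers through views: for every propagator p over Val', every view φ, and every domain d over Val, p is subsumed by φ(d) (i.e., p(d'') = d'' for every domain d'' over Val' with d'' ⊆ φ(d) pointwise) if and only if φ̂(p) is subsumed by d (i.e., φ̂(p)(d') = d' for every domain d' over Val with d' ⊆ d pointwise). -/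
/-!
Since every `φ x` is injective, `φ⁻ ∘ φ` is the identity, so `φ̂(p)(d') = φ⁻ (p (φ d'))` reduces
to `d'` whenever `p` fixes `φ d'`. Conversely, domains below `φ(d)` lie in the range of `φ`, where
`φ ∘ φ⁻` is the identity; as `p` is contracting, `p d''` lies there as well, so `φ⁻` separates
`p d''` from `d''` unless they are equal.
-/

namespace Stmt9

variable {Var Val Val' : Type*}

/-- A view applied to a domain (pointwise image). -/
def img (φ : Var → Val → Val') (d : Var → Set Val) : Var → Set Val' := fun x => φ x '' d x

/-- The inverse of a view applied to a domain (pointwise preimage). -/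
def pre (φ : Var → Val → Val') (d : Var → Set Val') : Var → Set Val := fun x => φ x ⁻¹' d x

/-- The derived propagator `φ̂(p) = φ⁻ ∘ p ∘ φ`. -/
def derived (φ : Var → Val → Val') (p : (Var → Set Val') → Var → Set Val')
    (d : Var → Set Val) : Var → Set Val := pre φ (p (img φ d))

section Views

variable {φ : Var → Val → Val'}

theorem img_mono {d' d : Var → Set Val} (h : ∀ x, d' x ⊆ d x) (x : Var) :
    img φ d' x ⊆ img φ d x :=
  Set.image_mono (h x)

theorem img_subset_range (d : Var → Set Val) (x : Var) : img φ d x ⊆ Set.range (φ x) :=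
  Set.image_subset_range _ _

theorem pre_img (hφ : ∀ x, Function.Injective (φ x)) (d : Var → Set Val) :
    pre φ (img φ d) = d :=
  funext fun x => Set.preimage_image_eq _ (hφ x)

theorem img_pre {d : Var → Set Val'} (hd : ∀ x, d x ⊆ Set.range (φ x)) :
    img φ (pre φ d) = d :=
  funext fun x => Set.image_preimage_eq_of_subset (hd x)

theorem pre_subset_of_subset_img (hφ : ∀ x, Function.Injective (φ x))
    {d'' : Var → Set Val'} {d : Var → Set Val} (h : ∀ x, d'' x ⊆ img φ d x) (x : Var) :
    pre φ d'' x ⊆ d x := by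
  rw [← pre_img hφ d]
  exact Set.preimage_mono (h x)

theorem eq_of_pre_eq_pre {d₁ d₂ : Var → Set Val'} (h₁ : ∀ x, d₁ x ⊆ Set.range (φ x))
    (h₂ : ∀ x, d₂ x ⊆ Set.range (φ x)) (h : pre φ d₁ = pre φ d₂) : d₁ = d₂ := by
  rw [← img_pre h₁, h, img_pre h₂]

end Views

theorem subsumption_iff_general (φ : Var → Val → Val')
    (hφ : ∀ x, Function.Injective (φ x))
    (p : (Var → Set Val') → Var → Set Val')
    (hcontr : ∀ d x, p d x ⊆ d x)
    (d : Var → Set Val) :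
    (∀ d'' : Var → Set Val', (∀ x, d'' x ⊆ img φ d x) → p d'' = d'') ↔
    (∀ d' : Var → Set Val, (∀ x, d' x ⊆ d x) → derived φ p d' = d') := by
  constructor
  · intro h d' hd'
    rw [derived, h _ (img_mono hd'), pre_img hφ]
  · intro h d'' hd''
    have hrange : ∀ x, d'' x ⊆ Set.range (φ x) :=
      fun x => (hd'' x).trans (img_subset_range d x)
    have hpre : pre φ (p d'') = pre φ d'' := by
      simpa only [derived, img_pre hrange] using h _ (pre_subset_of_subset_img hφ hd'')
    exact eq_of_pre_eq_pre (fun x => (hcontr d'' x).trans (hrange x)) hrange hpre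

/-- Subsumption transfers through views: `p` is subsumed by `φ(d)` if and only if `φ̂(p)` is
subsumed by `d`. -/
theorem subsumption_iff (φ : Var → Val → Val')
    (hφ : ∀ x, Function.Injective (φ x))
    (p : (Var → Set Val') → Var → Set Val')
    (hcontr : ∀ d x, p d x ⊆ d x)
    (hmono : ∀ d' d : Var → Set Val', (∀ x, d' x ⊆ d x) → ∀ x, p d' x ⊆ p d x)
    (d : Var → Set Val) :
    (∀ d'' : Var → Set Val', (∀ x, d'' x ⊆ img φ d x) → p d'' = d'') ↔
    (∀ d' : Var → Set Val, (∀ x, d' x ⊆ d x) → derived φ p d' = d') :=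
  subsumption_iff_general φ hφ p hcontr d

end Stmt9
end

section
/- Derived propagators compose: let φ be a view from Val to Val' and φ' a view from Val' to Val''; then the pointwise composition ψ_x = φ'_x ∘ φ_x is a view from Val to Val'', and for every propagator p over Val'' and every domain d over Val, φ̂(φ̂'(p))(d) = ψ̂(p)(d). -/
namespace Stmt13

variable {Var Val Val' Val'' : Type*}

/-- A view applied to a domain (pointwise image). -/
def img {Val Val' : Type*} (φ : Var → Val → Val') (d : Var → Set Val) : Var → Set Val' :=
  fun x => φ x '' d x

/-- The inverse of a view applied to a domain (pointwise preimage). -/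
def pre {Val Val' : Type*} (φ : Var → Val → Val') (d : Var → Set Val') : Var → Set Val :=
  fun x => φ x ⁻¹' d x

/-- The derived propagator `φ̂(p) = φ⁻ ∘ p ∘ φ`. -/
def derived {Val Val' : Type*} (φ : Var → Val → Val')
    (p : (Var → Set Val') → Var → Set Val') (d : Var → Set Val) : Var → Set Val :=
  pre φ (p (img φ d))

theorem img_img (φ : Var → Val → Val') (φ' : Var → Val' → Val'') (d : Var → Set Val) :
    img φ' (img φ d) = img (fun x => φ' x ∘ φ x) d :=
  funext fun x => (Set.image_comp (φ' x) (φ x) (d x)).symm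

theorem pre_pre (φ : Var → Val → Val') (φ' : Var → Val' → Val'') (d : Var → Set Val'') :
    pre φ (pre φ' d) = pre (fun x => φ' x ∘ φ x) d :=
  funext fun x => (Set.preimage_comp (g := φ' x) (f := φ x) (s := d x)).symm

theorem derived_derived (φ : Var → Val → Val') (φ' : Var → Val' → Val'')
    (p : (Var → Set Val'') → Var → Set Val'') (d : Var → Set Val) :
    derived φ (derived φ' p) d = derived (fun x => φ' x ∘ φ x) p d := by
  simp only [derived, img_img, pre_pre]

theorem derived_compose_general (φ : Var → Val → Val') (φ' : Var → Val' → Val'')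
    (hφ : ∀ x, Function.Injective (φ x))
    (hφ' : ∀ x, Function.Injective (φ' x))
    (p : (Var → Set Val'') → Var → Set Val'') :
    (∀ x, Function.Injective (φ' x ∘ φ x)) ∧
    ∀ d : Var → Set Val,
      derived φ (derived φ' p) d = derived (fun x => φ' x ∘ φ x) p d :=
  ⟨fun x => (hφ' x).comp (hφ x), derived_derived φ φ' p⟩

/-- Derived propagators compose: if `φ` is a view from `Val` to `Val'` and `φ'` a view from
`Val'` to `Val''`, then the pointwise composition `ψ_x = φ'_x ∘ φ_x` is a view from `Val` to
`Val''` (each `ψ_x` is injective), and for every propagator `p` over `Val''` and every domain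
`d` over `Val`, `φ̂(φ̂'(p))(d) = ψ̂(p)(d)`. -/
theorem derived_compose (φ : Var → Val → Val') (φ' : Var → Val' → Val'')
    (hφ : ∀ x, Function.Injective (φ x))
    (hφ' : ∀ x, Function.Injective (φ' x))
    (p : (Var → Set Val'') → Var → Set Val'')
    (hcontr : ∀ d x, p d x ⊆ d x)
    (hmono : ∀ d' d : Var → Set Val'', (∀ x, d' x ⊆ d x) → ∀ x, p d' x ⊆ p d x) :
    (∀ x, Function.Injective (φ' x ∘ φ x)) ∧
    ∀ d : Var → Set Val,
      derived φ (derived φ' p) d = derived (fun x => φ' x ∘ φ x) p d :=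
  derived_compose_general φ φ' hφ hφ' p

end Stmt13
end

section
/- Offset views are interval bijective: for the view given by φ_x(v) = v + o x (with o : Var → ℤ) on integer values, (1) for every finite nonempty constraint c over ℤ, φ_Asn ⁻¹' ⟦conv(c)⟧ = ⟦conv(φ_Asn ⁻¹' c)⟧, and (2) for every domain d with nonempty finite variable domains, φ_Asn '' ⟦conv(⟦d⟧)⟧ = ⟦conv(φ_Asn '' ⟦d⟧)⟧. -/
namespace Stmt14

variable {Var : Type*}

/-- The assignment set of a domain. -/
def asn (d : Var → Set ℤ) : Set (Var → ℤ) := {a | ∀ x, a x ∈ d x}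

/-- A view lifted to assignments. -/
def lift (φ : Var → ℤ → ℤ) (a : Var → ℤ) : Var → ℤ := fun x => φ x (a x)

/-- The strongest convex domain containing a constraint: for a finite nonempty constraint `c`,
`conv c x = Set.Icc (min over a ∈ c of a x) (max over a ∈ c of a x)`, and `conv ∅` is the
empty domain.  (A value lies between the min and the max of `{a x | a ∈ c}` iff it is above
some `a x` and below some `a' x`.) -/
def conv (c : Set (Var → ℤ)) : Var → Set ℤ :=
  fun x => {v | (∃ a ∈ c, a x ≤ v) ∧ (∃ a ∈ c, v ≤ a x)}

/-! An offset view is a family of order automorphisms of `ℤ`. Such a family transports the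
description of the hull as the values lying above some and below some value of the constraint,
because every assignment of the constraint is the lift of an assignment of its preimage. The image
under a bijection is the preimage under the inverse, so (2) is (1) for the inverse view. -/

section OrderIso

variable (e : Var → ℤ ≃o ℤ)

theorem lift_orderIso_lift_symm (b : Var → ℤ) :
    lift (fun x => e x) (lift (fun x => (e x).symm) b) = b :=
  funext fun x => (e x).apply_symm_apply (b x)

theorem lift_symm_lift_orderIso (a : Var → ℤ) :
    lift (fun x => (e x).symm) (lift (fun x => e x) a) = a :=
  funext fun x => (e x).symm_apply_apply (a x)

theorem conv_preimage_lift (c : Set (Var → ℤ)) (x : Var) :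
    conv (lift (fun x => e x) ⁻¹' c) x = e x ⁻¹' conv c x := by
  ext v
  refine and_congr ⟨?_, ?_⟩ ⟨?_, ?_⟩
  · rintro ⟨a, ha, hav⟩
    exact ⟨_, ha, (e x).monotone hav⟩
  · rintro ⟨b, hb, hbv⟩
    refine ⟨lift (fun x => (e x).symm) b, ?_, (e x).symm_apply_le.mpr hbv⟩
    rwa [Set.mem_preimage, lift_orderIso_lift_symm]
  · rintro ⟨a, ha, hva⟩
    exact ⟨_, ha, (e x).monotone hva⟩
  · rintro ⟨b, hb, hvb⟩
    refine ⟨lift (fun x => (e x).symm) b, ?_, (e x).le_symm_apply.mpr hvb⟩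
    rwa [Set.mem_preimage, lift_orderIso_lift_symm]

theorem preimage_lift_asn_conv (c : Set (Var → ℤ)) :
    lift (fun x => e x) ⁻¹' asn (conv c) = asn (conv (lift (fun x => e x) ⁻¹' c)) := by
  ext a
  simp only [asn, conv_preimage_lift]
  rfl

theorem image_lift_eq_preimage_lift_symm (s : Set (Var → ℤ)) :
    lift (fun x => e x) '' s = lift (fun x => (e x).symm) ⁻¹' s :=
  congrFun (Set.image_eq_preimage_of_inverse (lift_symm_lift_orderIso e)
    (lift_orderIso_lift_symm e)) s

theorem image_lift_asn_conv (c : Set (Var → ℤ)) :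
    lift (fun x => e x) '' asn (conv c) = asn (conv (lift (fun x => e x) '' c)) := by
  simp only [image_lift_eq_preimage_lift_symm]
  exact preimage_lift_asn_conv (fun x => (e x).symm) c

end OrderIso

/-- Offset views are interval bijective: for the view `φ_x(v) = v + o x`, (1) the preimage of
the convex hull of any finite nonempty constraint equals the convex hull of the preimage, and
(2) the image of the convex hull of the assignment set of any domain with nonempty finite
variable domains equals the convex hull of the image. -/
theorem offset_interval_bijective (o : Var → ℤ) :
    (∀ c : Set (Var → ℤ), c.Finite → c.Nonempty →
      lift (fun x v => v + o x) ⁻¹' asn (conv c) =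
        asn (conv (lift (fun x v => v + o x) ⁻¹' c))) ∧
    (∀ d : Var → Set ℤ, (∀ x, (d x).Nonempty) → (∀ x, (d x).Finite) →
      lift (fun x v => v + o x) '' asn (conv (asn d)) =
        asn (conv (lift (fun x v => v + o x) '' asn d))) := by
  exact ⟨fun c _ _ => preimage_lift_asn_conv (fun x => OrderIso.addRight (o x)) c,
    fun d _ _ => image_lift_asn_conv (fun x => OrderIso.addRight (o x)) (asn d)⟩

end Stmt14
end

section
/- Minus views are interval bijective: for the view given by φ_x(v) = -v on integer values, (1) for every finite nonempty constraint c over ℤ, φ_Asn ⁻¹' ⟦conv(c)⟧ = ⟦conv(φ_Asn ⁻¹' c)⟧, and (2) for every domain d with nonempty finite variable domains, φ_Asn '' ⟦conv(⟦d⟧)⟧ = ⟦conv(φ_Asn '' ⟦d⟧)⟧. -/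
namespace Stmt15

variable {Var : Type*}

/-- The assignment set of a domain. -/
def asn (d : Var → Set ℤ) : Set (Var → ℤ) := {a | ∀ x, a x ∈ d x}

/-- A view lifted to assignments. -/
def lift (φ : Var → ℤ → ℤ) (a : Var → ℤ) : Var → ℤ := fun x => φ x (a x)

/-- The strongest convex domain containing a constraint: for a finite nonempty constraint `c`,
`conv c x = Set.Icc (min over a ∈ c of a x) (max over a ∈ c of a x)`, and `conv ∅` is the
empty domain.  (A value lies between the min and the max of `{a x | a ∈ c}` iff it is above
some `a x` and below some `a' x`.) -/
def conv (c : Set (Var → ℤ)) : Var → Set ℤ :=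
  fun x => {v | (∃ a ∈ c, a x ≤ v) ∧ (∃ a ∈ c, v ≤ a x)}

/-! The lifted minus view is pointwise negation `a ↦ -a` of assignments, which is its own inverse,
so preimages and images under it are both the pointwise negation `-c` of a constraint. Negation
reverses `≤`, so it swaps the "above some `a x`" and "below some `a' x`" halves of `conv`, whence
`conv (-c) = -conv c`. -/

open scoped Pointwise

theorem lift_neg : lift (fun (_ : Var) (v : ℤ) => -v) = Neg.neg := rfl

theorem asn_neg (d : Var → Set ℤ) : asn (-d) = -asn d := rfl

theorem conv_neg (c : Set (Var → ℤ)) : conv (-c) = -conv c := by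
  ext x v
  simp only [conv, Pi.neg_apply, Set.mem_neg, Set.mem_ofPred_eq, Set.exists_neg_mem, neg_le, le_neg]
  exact and_comm

theorem neg_asn_conv (c : Set (Var → ℤ)) : -asn (conv c) = asn (conv (-c)) := by
  rw [conv_neg, asn_neg]

/-- Minus views are interval bijective: for the view `φ_x(v) = -v`, (1) the preimage of
the convex hull of any finite nonempty constraint equals the convex hull of the preimage, and
(2) the image of the convex hull of the assignment set of any domain with nonempty finite
variable domains equals the convex hull of the image. -/
theorem minus_interval_bijective :
    (∀ c : Set (Var → ℤ), c.Finite → c.Nonempty →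
      lift (fun (_ : Var) (v : ℤ) => -v) ⁻¹' asn (conv c) =
        asn (conv (lift (fun (_ : Var) (v : ℤ) => -v) ⁻¹' c))) ∧
    (∀ d : Var → Set ℤ, (∀ x, (d x).Nonempty) → (∀ x, (d x).Finite) →
      lift (fun (_ : Var) (v : ℤ) => -v) '' asn (conv (asn d)) =
        asn (conv (lift (fun (_ : Var) (v : ℤ) => -v) '' asn d))) := by
  rw [lift_neg]
  refine ⟨fun c _ _ => ?_, fun d _ _ => ?_⟩
  · rw [Set.neg_preimage, Set.neg_preimage, neg_asn_conv]
  · rw [Set.image_neg_eq_neg, Set.image_neg_eq_neg, neg_asn_conv]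

end Stmt15
end

section
/- Scale views are interval injective: for the view given by φ_x(v) = k x * v with k : Var → ℤ and k x ≠ 0 for all x, and for every finite nonempty φ-constraint c over ℤ (every a ∈ c lies in the range of φ_Asn), the preimage of the convex hull equals the convex hull of the preimage: φ_Asn ⁻¹' ⟦conv(c)⟧ = ⟦conv(φ_Asn ⁻¹' c)⟧. -/
namespace Stmt16

variable {Var : Type*}

/-- The assignment set of a domain. -/
def asn (d : Var → Set ℤ) : Set (Var → ℤ) := {a | ∀ x, a x ∈ d x}

/-- A view lifted to assignments. -/
def lift (φ : Var → ℤ → ℤ) (a : Var → ℤ) : Var → ℤ := fun x => φ x (a x)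

/-- The strongest convex domain containing a constraint: for a finite nonempty constraint `c`,
`conv c x = Set.Icc (min over a ∈ c of a x) (max over a ∈ c of a x)`, and `conv ∅` is the
empty domain.  (A value lies between the min and the max of `{a x | a ∈ c}` iff it is above
some `a x` and below some `a' x`.) -/
def conv (c : Set (Var → ℤ)) : Var → Set ℤ :=
  fun x => {v | (∃ a ∈ c, a x ≤ v) ∧ (∃ a ∈ c, v ≤ a x)}

theorem exists_mem_iff_exists_mem_preimage {α β : Type*} {f : α → β} {c : Set β}
    (hc : c ⊆ Set.range f) {p : β → Prop} :
    (∃ a ∈ c, p a) ↔ ∃ b ∈ f ⁻¹' c, p (f b) := by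
  conv_lhs => rw [← Set.image_preimage_eq_of_subset hc]
  exact Set.exists_mem_image

/-- The witnesses bounding `conv c` at `x` are `φ`-images of members of `lift φ ⁻¹' c`, and `φ x`
preserves or reverses the order between them, so the witnesses transfer between the two hulls
(with lower and upper bounds swapped in the antitone case). -/
theorem preimage_asn_conv_of_strictMono_or_strictAnti (φ : Var → ℤ → ℤ)
    (hφ : ∀ x, StrictMono (φ x) ∨ StrictAnti (φ x)) (c : Set (Var → ℤ))
    (hc : c ⊆ Set.range (lift φ)) :
    lift φ ⁻¹' asn (conv c) = asn (conv (lift φ ⁻¹' c)) := by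
  ext a
  refine forall_congr' fun x => ?_
  simp only [conv, Set.mem_ofPred, exists_mem_iff_exists_mem_preimage hc, lift]
  rcases hφ x with hmono | hanti
  · simp only [hmono.le_iff_le]
  · simp only [hanti.le_iff_ge]
    exact and_comm

theorem strictMono_or_strictAnti_mul_left {k : ℤ} (hk : k ≠ 0) :
    StrictMono (k * ·) ∨ StrictAnti (k * ·) :=
  hk.lt_or_gt.elim (fun hneg => .inr (strictAnti_mul_left hneg))
    (fun hpos => .inl (strictMono_mul_left_of_pos hpos))

theorem scale_interval_injective_general (k : Var → ℤ) (hk : ∀ x, k x ≠ 0)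
    (c : Set (Var → ℤ))
    (hphic : ∀ a ∈ c, a ∈ Set.range (lift (fun x v => k x * v))) :
    lift (fun x v => k x * v) ⁻¹' asn (conv c) =
      asn (conv (lift (fun x v => k x * v) ⁻¹' c)) :=
  preimage_asn_conv_of_strictMono_or_strictAnti _
    (fun x => strictMono_or_strictAnti_mul_left (hk x)) c hphic

/-- Scale views are interval injective: for the view `φ_x(v) = k x * v` with `k x ≠ 0` for all
`x`, and every finite nonempty `φ`-constraint `c`, the preimage of the convex hull equals the
convex hull of the preimage. -/
theorem scale_interval_injective (k : Var → ℤ) (hk : ∀ x, k x ≠ 0)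
    (c : Set (Var → ℤ)) (hfin : c.Finite) (hne : c.Nonempty)
    (hphic : ∀ a ∈ c, a ∈ Set.range (lift (fun x v => k x * v))) :
    lift (fun x v => k x * v) ⁻¹' asn (conv c) =
      asn (conv (lift (fun x v => k x * v) ⁻¹' c)) :=
  scale_interval_injective_general k hk c hphic

end Stmt16
end

section
/- Scale views with coefficient of absolute value at least 2 are not interval bijective: if Var is nonempty and k : Var → ℤ satisfies |k x₀| ≥ 2 for some variable x₀, then for the view given by φ_x(v) = k x * v there exists a domain d with nonempty finite variable domains (for instance d x = {0,1} for all x) such that φ_Asn '' ⟦conv(⟦d⟧)⟧ ≠ ⟦conv(φ_Asn '' ⟦d⟧)⟧. -/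
/-!
Take `d x = {0, 1}`. Every point of `φ_Asn '' ⟦conv ⟦d⟧⟧` has `x`-coordinate a multiple of
`k x`, whereas `conv (φ_Asn '' ⟦d⟧) x` is the whole integer interval between `0` and `k x`, and
so contains `sign (k x)`. When `|k x₀| ≥ 2`, `sign (k x₀)` is not a multiple of `k x₀`.
-/

namespace Stmt17

variable {Var : Type*}

/-- The assignment set of a domain. -/
def asn (d : Var → Set ℤ) : Set (Var → ℤ) := {a | ∀ x, a x ∈ d x}

/-- A view lifted to assignments. -/
def lift (φ : Var → ℤ → ℤ) (a : Var → ℤ) : Var → ℤ := fun x => φ x (a x)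

/-- The strongest convex domain containing a constraint: for a finite nonempty constraint `c`,
`conv c x = Set.Icc (min over a ∈ c of a x) (max over a ∈ c of a x)`, and `conv ∅` is the
empty domain.  (A value lies between the min and the max of `{a x | a ∈ c}` iff it is above
some `a x` and below some `a' x`.) -/
def conv (c : Set (Var → ℤ)) : Var → Set ℤ :=
  fun x => {v | (∃ a ∈ c, a x ≤ v) ∧ (∃ a ∈ c, v ≤ a x)}

theorem dvd_of_mem_image_lift_mul {k : Var → ℤ} {c : Set (Var → ℤ)} {b : Var → ℤ}
    (hb : b ∈ lift (fun x v => k x * v) '' c) (x : Var) : k x ∣ b x := by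
  obtain ⟨a, -, rfl⟩ := hb
  exact dvd_mul_right _ _

theorem sign_mem_asn_conv_image_lift_mul (k : Var → ℤ) {c : Set (Var → ℤ)}
    (h0 : (fun _ => 0) ∈ c) (h1 : (fun _ => 1) ∈ c) :
    (fun x => (k x).sign) ∈ asn (conv (lift (fun x v => k x * v) '' c)) := by
  intro x
  show (k x).sign ∈ _
  have hzero : (fun _ => 0) ∈ lift (fun x v => k x * v) '' c :=
    ⟨_, h0, funext fun _ => mul_zero _⟩
  have hk : k ∈ lift (fun x v => k x * v) '' c := ⟨_, h1, funext fun _ => mul_one _⟩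
  rcases lt_trichotomy (k x) 0 with hneg | hnil | hpos
  · rw [Int.sign_eq_neg_one_of_neg hneg]
    exact ⟨⟨_, hk, by omega⟩, ⟨_, hzero, by omega⟩⟩
  · rw [hnil, Int.sign_zero]
    exact ⟨⟨_, hzero, le_rfl⟩, ⟨_, hzero, le_rfl⟩⟩
  · rw [Int.sign_eq_one_of_pos hpos]
    exact ⟨⟨_, hzero, by omega⟩, ⟨_, hk, by omega⟩⟩

theorem Int.not_dvd_sign {k : ℤ} (hk : 2 ≤ |k|) : ¬ k ∣ k.sign := by
  intro hdvd
  have hne : k ≠ 0 := by rintro rfl; simp at hk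
  have hone : k.natAbs ∣ 1 := by
    simpa [Int.natAbs_sign_of_ne_zero hne] using Int.natAbs_dvd_natAbs.mpr hdvd
  rw [Int.abs_eq_natAbs, Nat.dvd_one.mp hone] at hk
  norm_num at hk

theorem scale_not_interval_bijective_general (k : Var → ℤ)
    (hk : ∃ x₀ : Var, 2 ≤ |k x₀|) :
    ∃ d : Var → Set ℤ, (∀ x, (d x).Nonempty) ∧ (∀ x, (d x).Finite) ∧
      lift (fun x v => k x * v) '' asn (conv (asn d)) ≠
        asn (conv (lift (fun x v => k x * v) '' asn d)) := by
  obtain ⟨x₀, hx₀⟩ := hk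
  refine ⟨fun _ => {0, 1}, fun _ => Set.insert_nonempty _ _,
    fun _ => (Set.finite_singleton 1).insert 0, fun h => ?_⟩
  have hsign := sign_mem_asn_conv_image_lift_mul k (c := asn fun _ => {0, 1})
    (fun _ => by simp) (fun _ => by simp)
  rw [← h] at hsign
  exact Int.not_dvd_sign hx₀ (dvd_of_mem_image_lift_mul hsign x₀)

/-- Scale views with coefficient of absolute value at least 2 are not interval bijective: if
`|k x₀| ≥ 2` for some variable `x₀`, then for the view `φ_x(v) = k x * v` there is a domain `d`
with nonempty finite variable domains such that
`φ_Asn '' ⟦conv(⟦d⟧)⟧ ≠ ⟦conv(φ_Asn '' ⟦d⟧)⟧`. -/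
theorem scale_not_interval_bijective [Nonempty Var] (k : Var → ℤ)
    (hk : ∃ x₀ : Var, 2 ≤ |k x₀|) :
    ∃ d : Var → Set ℤ, (∀ x, (d x).Nonempty) ∧ (∀ x, (d x).Finite) ∧
      lift (fun x v => k x * v) '' asn (conv (asn d)) ≠
        asn (conv (lift (fun x v => k x * v) '' asn d)) :=
  scale_not_interval_bijective_general k hk

end Stmt17
end
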